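/- arXiv:2503.13996 — 4 statements merged into one kernel-verified Lean document; each statement's English description precedes it below -/
import Mathlib

section
/- Let r ≥ 1 and let φ₀, φ₁, …, φ_{r-1} : [0,∞) → ℝ be functions such that each φ_{k-1} is differentiable for k = 1, …, r-1, and let λ₁, …, λ_{r-1} > 0 satisfy φ_k(t) = φ_{k-1}'(t) + λ_k·φ_{k-1}(t) for all t ≥ 0 and all k = 1, …, r-1. Suppose φ_k(0) ≥ 0 for every k = 0, …, r-1, and φ_{r-1}(t) ≥ 0 for all t ≥ 0. Then φ_k(t) ≥ 0 for every k = 0, …, r-1 and all t ≥ 0; in particular φ₀(t) ≥ 0 for all t ≥ 0. -/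
/-!
If `y' + λ y ≥ 0` then `t ↦ exp (λ t) y t` is nondecreasing, so `y` stays nonnegative once it
starts nonnegative. In the cascade `φₖ = φₖ₋₁' + λₖ φₖ₋₁` this passes nonnegativity from `φₖ`
down to `φₖ₋₁`, and a downward induction from `φ_{r-1}` reaches `φ₀`.
-/

open Set

theorem nonneg_of_hasDerivWithinAt_add_mul_nonneg {y y' : ℝ → ℝ} {l a : ℝ}
    (hy : ∀ t ∈ Ici a, HasDerivWithinAt y (y' t) (Ici a) t)
    (hineq : ∀ t ∈ Ici a, 0 ≤ y' t + l * y t) (ha : 0 ≤ y a) :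
    ∀ t ∈ Ici a, 0 ≤ y t := by
  set g : ℝ → ℝ := fun t => Real.exp (l * t) * y t
  have hg : ∀ t ∈ Ici a,
      HasDerivWithinAt g (Real.exp (l * t) * (y' t + l * y t)) (Ici a) t := by
    intro t ht
    have hexp : HasDerivWithinAt (fun t => Real.exp (l * t)) (Real.exp (l * t) * (l * 1))
        (Ici a) t := ((hasDerivWithinAt_id t _).const_mul l).exp
    exact (hexp.mul (hy t ht)).congr_deriv (by ring)
  have hmono : MonotoneOn g (Ici a) := by
    refine monotoneOn_of_hasDerivWithinAt_nonneg (convex_Ici a)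
      (f' := fun t => Real.exp (l * t) * (y' t + l * y t))
      (fun t ht => (hg t ht).continuousWithinAt) (fun t ht => ?_) (fun t ht => ?_)
    · exact (hg t (interior_subset ht)).mono interior_subset
    · exact mul_nonneg (Real.exp_pos _).le (hineq t (interior_subset ht))
  intro t ht
  have hgt : 0 ≤ g t :=
    (mul_nonneg (Real.exp_pos _).le ha).trans (hmono self_mem_Ici ht ht)
  exact nonneg_of_mul_nonneg_right hgt (Real.exp_pos _)

theorem nonneg_of_hasDerivWithinAt_cascade {φ φ' : ℕ → ℝ → ℝ} {lam : ℕ → ℝ} {n : ℕ} {a : ℝ}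
    (hderiv : ∀ k < n, ∀ t ∈ Ici a, HasDerivWithinAt (φ k) (φ' k t) (Ici a) t)
    (hrec : ∀ k < n, ∀ t ∈ Ici a, φ (k + 1) t = φ' k t + lam (k + 1) * φ k t)
    (hinit : ∀ k < n, 0 ≤ φ k a) (htop : ∀ t ∈ Ici a, 0 ≤ φ n t) :
    ∀ k ≤ n, ∀ t ∈ Ici a, 0 ≤ φ k t := by
  intro k hk
  induction hk using Nat.decreasingInduction with
  | self => exact htop
  | of_succ k hk ih =>
    exact nonneg_of_hasDerivWithinAt_add_mul_nonneg (hderiv k hk)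
      (fun t ht => hrec k hk t ht ▸ ih t ht) (hinit k hk)

theorem stmt_8_general (r : ℕ) (φ φ' : ℕ → ℝ → ℝ) (lam : ℕ → ℝ)
    (hderiv : ∀ k, 1 ≤ k → k ≤ r - 1 → ∀ t, 0 ≤ t →
      HasDerivWithinAt (φ (k - 1)) (φ' (k - 1) t) (Set.Ici 0) t)
    (hrec : ∀ k, 1 ≤ k → k ≤ r - 1 → ∀ t, 0 ≤ t →
      φ k t = φ' (k - 1) t + lam k * φ (k - 1) t)
    (hinit : ∀ k, k ≤ r - 1 → 0 ≤ φ k 0)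
    (htop : ∀ t, 0 ≤ t → 0 ≤ φ (r - 1) t) :
    ∀ k, k ≤ r - 1 → ∀ t, 0 ≤ t → 0 ≤ φ k t :=
  nonneg_of_hasDerivWithinAt_cascade (lam := lam)
    (fun k hk t ht => by simpa using hderiv (k + 1) (Nat.le_add_left 1 k) hk t ht)
    (fun k hk t ht => by simpa using hrec (k + 1) (Nat.le_add_left 1 k) hk t ht)
    (fun k hk => hinit k hk.le) htop

/-- HOCBF cascade: with `φ_k = φ_{k-1}' + λ_k φ_{k-1}` for `k = 1, …, r-1`,
`λ_k > 0`, `φ_k 0 ≥ 0` for `k = 0, …, r-1`, and `φ_{r-1} t ≥ 0` for all `t ≥ 0`,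
every `φ_k` (in particular `φ_0`) remains nonnegative on `[0,∞)`. -/
theorem stmt_8 (r : ℕ) (hr : 1 ≤ r) (φ φ' : ℕ → ℝ → ℝ) (lam : ℕ → ℝ)
    (hlam : ∀ k, 1 ≤ k → k ≤ r - 1 → 0 < lam k)
    (hderiv : ∀ k, 1 ≤ k → k ≤ r - 1 → ∀ t, 0 ≤ t →
      HasDerivWithinAt (φ (k - 1)) (φ' (k - 1) t) (Set.Ici 0) t)
    (hrec : ∀ k, 1 ≤ k → k ≤ r - 1 → ∀ t, 0 ≤ t →
      φ k t = φ' (k - 1) t + lam k * φ (k - 1) t)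
    (hinit : ∀ k, k ≤ r - 1 → 0 ≤ φ k 0)
    (htop : ∀ t, 0 ≤ t → 0 ≤ φ (r - 1) t) :
    ∀ k, k ≤ r - 1 → ∀ t, 0 ≤ t → 0 ≤ φ k t :=
  stmt_8_general r φ φ' lam hderiv hrec hinit htop
end

section
/- Let n ≥ 1 and let λ_r, λ_V, δ₁, β₁ be reals with 0 < λ_r ≤ λ_V, δ₁ ≥ 0, β₁ > 0. Let φ, V : [0,∞) → ℝ be differentiable with V(t) ≥ 0 and V'(t) ≤ -λ_V·V(t) for all t ≥ 0, let d̃, a : [0,∞) → ℝⁿ with ‖d̃(t)‖ ≤ δ₁·exp(-λ_V·t/2) for all t ≥ 0 (Euclidean norm), and suppose the compensated barrier condition φ'(t) + λ_r·φ(t) ≥ ⟨a(t), d̃(t)⟩ + ‖a(t)‖·δ₁·exp(-λ_V·t/2) holds for all t ≥ 0. If β₁·φ(0) ≥ V(0), then the function h̄(t) := β₁·φ(t) - V(t) satisfies h̄(t) ≥ 0 for all t ≥ 0, and consequently φ(t) ≥ V(t)/β₁ ≥ 0 for all t ≥ 0. -/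
/-!
By Cauchy–Schwarz, `⟨a, d̃⟩ ≥ -‖a‖ δ₁ e^{-λ_V t/2}`, so the compensated barrier condition
leaves `φ' ≥ -λ_r φ`. Together with `V' ≤ -λ_V V ≤ -λ_r V` (as `V ≥ 0` and `λ_r ≤ λ_V`) this gives
`h̄' ≥ -λ_r h̄` for `h̄ = β₁ φ - V`, so `e^{λ_r t} h̄(t)` is nondecreasing and `h̄` keeps the sign of
`h̄(0) ≥ 0`.
-/

open Set Real

lemma inner_add_norm_mul_nonneg_of_norm_le {F : Type*} [SeminormedAddCommGroup F]
    [InnerProductSpace ℝ F] (x : F) {y : F} {B : ℝ} (hy : ‖y‖ ≤ B) :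
    0 ≤ inner ℝ x y + ‖x‖ * B := by
  have hxy : -(‖x‖ * ‖y‖) ≤ inner ℝ x y := neg_le_of_abs_le (abs_real_inner_le_norm x y)
  linarith [mul_le_mul_of_nonneg_left hy (norm_nonneg x)]

section Comparison

variable {D : Set ℝ} {f f' : ℝ → ℝ} {c : ℝ}

lemma monotoneOn_exp_mul_of_neg_mul_le_deriv (hD : Convex ℝ D)
    (hf : ∀ x ∈ D, HasDerivWithinAt f (f' x) D x) (hf' : ∀ x ∈ D, -c * f x ≤ f' x) :
    MonotoneOn (fun x => exp (c * x) * f x) D := by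
  have hderiv : ∀ x ∈ D,
      HasDerivWithinAt (fun x => exp (c * x) * f x) (exp (c * x) * (c * f x + f' x)) D x := by
    intro x hx
    have hexp : HasDerivAt (fun x => exp (c * x)) (exp (c * x) * c) x := by
      simpa using ((hasDerivAt_id x).const_mul c).exp
    exact (hexp.hasDerivWithinAt.mul (hf x hx)).congr_deriv (by ring)
  refine monotoneOn_of_hasDerivWithinAt_nonneg hD (HasDerivWithinAt.continuousOn hderiv)
    (fun x hx => (hderiv x (interior_subset hx)).mono interior_subset) fun x hx => ?_
  have := hf' x (interior_subset hx)
  exact mul_nonneg (exp_pos _).le (by linarith)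

lemma nonneg_of_neg_mul_le_deriv (hD : Convex ℝ D)
    (hf : ∀ x ∈ D, HasDerivWithinAt f (f' x) D x) (hf' : ∀ x ∈ D, -c * f x ≤ f' x)
    {x₀ x : ℝ} (hx₀ : x₀ ∈ D) (hx : x ∈ D) (hle : x₀ ≤ x) (h₀ : 0 ≤ f x₀) :
    0 ≤ f x := by
  have hmono := monotoneOn_exp_mul_of_neg_mul_le_deriv hD hf hf' hx₀ hx hle
  have : 0 ≤ exp (c * x) * f x := (mul_nonneg (exp_pos _).le h₀).trans hmono
  exact nonneg_of_mul_nonneg_right this (exp_pos _)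

end Comparison

theorem stmt_9_general (n : ℕ) (lamr lamV δ₁ β₁ : ℝ)
    (hle : lamr ≤ lamV) (hβ₁ : 0 < β₁)
    (φ φ' V V' : ℝ → ℝ)
    (hφ : ∀ t, 0 ≤ t → HasDerivWithinAt φ (φ' t) (Set.Ici 0) t)
    (hV : ∀ t, 0 ≤ t → HasDerivWithinAt V (V' t) (Set.Ici 0) t)
    (hVpos : ∀ t, 0 ≤ t → 0 ≤ V t)
    (hVdec : ∀ t, 0 ≤ t → V' t ≤ -lamV * V t)
    (de a : ℝ → EuclideanSpace ℝ (Fin n))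
    (hde : ∀ t, 0 ≤ t → ‖de t‖ ≤ δ₁ * Real.exp (-lamV * t / 2))
    (hbar : ∀ t, 0 ≤ t →
      (inner ℝ (a t) (de t) : ℝ) + ‖a t‖ * δ₁ * Real.exp (-lamV * t / 2) ≤
        φ' t + lamr * φ t)
    (hinit : V 0 ≤ β₁ * φ 0) :
    ∀ t, 0 ≤ t → 0 ≤ β₁ * φ t - V t ∧ V t / β₁ ≤ φ t ∧ 0 ≤ V t / β₁ := by
  intro t ht
  have hφ' : ∀ s, 0 ≤ s → -lamr * φ s ≤ φ' s := fun s hs => by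
    have := inner_add_norm_mul_nonneg_of_norm_le (a s) (hde s hs)
    linarith [hbar s hs]
  have hbarrier' : ∀ s, 0 ≤ s → -lamr * (β₁ * φ s - V s) ≤ β₁ * φ' s - V' s := fun s hs => by
    linarith [mul_le_mul_of_nonneg_left (hφ' s hs) hβ₁.le,
      mul_le_mul_of_nonneg_right hle (hVpos s hs), hVdec s hs]
  have hbarrier_deriv : ∀ s ∈ Ici 0,
      HasDerivWithinAt (fun s => β₁ * φ s - V s) (β₁ * φ' s - V' s) (Ici 0) s :=
    fun s hs => ((hφ s hs).const_mul β₁).sub (hV s hs)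
  have hbarrier : 0 ≤ β₁ * φ t - V t :=
    nonneg_of_neg_mul_le_deriv (convex_Ici 0) hbarrier_deriv hbarrier'
      self_mem_Ici ht ht (by linarith)
  refine ⟨hbarrier, ?_, div_nonneg (hVpos t ht) hβ₁.le⟩
  rw [div_le_iff₀ hβ₁]
  linarith

/-- Core of Theorem 1 along a trajectory: under the compensated barrier
condition `φ' + λ_r φ ≥ ⟨a, d̃⟩ + ‖a‖ δ₁ e^{-λ_V t/2}`, with `V ≥ 0`,
`V' ≤ -λ_V V`, `‖d̃ t‖ ≤ δ₁ e^{-λ_V t/2}`, and `β₁ φ 0 ≥ V 0`, the candidate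
barrier `h̄ = β₁ φ - V` stays nonnegative, hence `φ t ≥ V t / β₁ ≥ 0`. -/
theorem stmt_9 (n : ℕ) (hn : 1 ≤ n) (lamr lamV δ₁ β₁ : ℝ)
    (hlamr : 0 < lamr) (hle : lamr ≤ lamV) (hδ₁ : 0 ≤ δ₁) (hβ₁ : 0 < β₁)
    (φ φ' V V' : ℝ → ℝ)
    (hφ : ∀ t, 0 ≤ t → HasDerivWithinAt φ (φ' t) (Set.Ici 0) t)
    (hV : ∀ t, 0 ≤ t → HasDerivWithinAt V (V' t) (Set.Ici 0) t)
    (hVpos : ∀ t, 0 ≤ t → 0 ≤ V t)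
    (hVdec : ∀ t, 0 ≤ t → V' t ≤ -lamV * V t)
    (de a : ℝ → EuclideanSpace ℝ (Fin n))
    (hde : ∀ t, 0 ≤ t → ‖de t‖ ≤ δ₁ * Real.exp (-lamV * t / 2))
    (hbar : ∀ t, 0 ≤ t →
      (inner ℝ (a t) (de t) : ℝ) + ‖a t‖ * δ₁ * Real.exp (-lamV * t / 2) ≤
        φ' t + lamr * φ t)
    (hinit : V 0 ≤ β₁ * φ 0) :
    ∀ t, 0 ≤ t → 0 ≤ β₁ * φ t - V t ∧ V t / β₁ ≤ φ t ∧ 0 ≤ V t / β₁ :=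
  stmt_9_general n lamr lamV δ₁ β₁ hle hβ₁ φ φ' V V' hφ hV hVpos hVdec de a hde hbar hinit
end

section
/- Let n ≥ 1 and let λ_{Vv}, λ_V, δ₁, β₂ be reals with 0 < λ_{Vv} ≤ λ_V, δ₁ ≥ 0, β₂ > 0. Let V_v, V : [0,∞) → ℝ be differentiable with V(t) ≥ 0 and V'(t) ≤ -λ_V·V(t) for all t ≥ 0, let d̃, a : [0,∞) → ℝⁿ with ‖d̃(t)‖ ≤ δ₁·exp(-λ_V·t/2) for all t ≥ 0 (Euclidean norm), and suppose V_v'(t) + λ_{Vv}·V_v(t) ≥ ⟨a(t), d̃(t)⟩ + ‖a(t)‖·δ₁·exp(-λ_V·t/2) for all t ≥ 0. If β₂·V_v(0) ≥ V(0), then h̄_V(t) := β₂·V_v(t) - V(t) satisfies h̄_V(t) ≥ 0 for all t ≥ 0, and consequently V_v(t) ≥ V(t)/β₂ ≥ 0 for all t ≥ 0. -/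
/-!
Cauchy–Schwarz and `‖d̃‖ ≤ δ₁ e^{-λ_V t/2}` make the compensation term dominate the unknown
`⟨a, d̃⟩`, so the barrier condition reduces to `V_v' + λ_{Vv} V_v ≥ 0`; together with
`V' + λ_{Vv} V ≤ (λ_{Vv} - λ_V) V ≤ 0` this gives `h̄' + λ_{Vv} h̄ ≥ 0` for `h̄ = β₂ V_v - V`.
Then `h̄ e^{λ_{Vv} t}` is nondecreasing, and `h̄ 0 ≥ 0` propagates to all `t ≥ 0`.
-/

open Real Set

theorem neg_mul_le_real_inner_of_norm_le {F : Type*} [NormedAddCommGroup F]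
    [InnerProductSpace ℝ F] (x : F) {y : F} {r : ℝ} (hy : ‖y‖ ≤ r) :
    -(‖x‖ * r) ≤ inner ℝ x y :=
  calc -(‖x‖ * r) ≤ -(‖x‖ * ‖y‖) := by gcongr
    _ ≤ inner ℝ x y := neg_le_of_abs_le (abs_real_inner_le_norm x y)

theorem monotoneOn_mul_exp_of_deriv_add_mul_nonneg {f f' : ℝ → ℝ} {c t₀ : ℝ}
    (hf : ∀ t, t₀ ≤ t → HasDerivWithinAt f (f' t) (Ici t₀) t)
    (hf' : ∀ t, t₀ ≤ t → 0 ≤ f' t + c * f t) :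
    MonotoneOn (fun t => f t * exp (c * t)) (Ici t₀) := by
  have hderiv : ∀ t, t₀ ≤ t → HasDerivWithinAt (fun t => f t * exp (c * t))
      ((f' t + c * f t) * exp (c * t)) (Ici t₀) t := fun t ht => by
    have hexp : HasDerivWithinAt (fun t => exp (c * t)) (exp (c * t) * c) (Ici t₀) t :=
      ((hasDerivAt_id t).const_mul c).exp.hasDerivWithinAt.congr_deriv (by simp)
    exact ((hf t ht).mul hexp).congr_deriv (by ring)
  refine monotoneOn_of_hasDerivWithinAt_nonneg
    (f' := fun t => (f' t + c * f t) * exp (c * t)) (convex_Ici t₀)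
    (fun t ht => (hderiv t ht).continuousWithinAt) (fun t ht => ?_) (fun t ht => ?_)
  · rw [interior_Ici] at ht ⊢
    exact (hderiv t ht.le).mono Ioi_subset_Ici_self
  · rw [interior_Ici] at ht
    exact mul_nonneg (hf' t ht.le) (exp_pos _).le

theorem nonneg_of_deriv_add_mul_nonneg {f f' : ℝ → ℝ} {c t₀ : ℝ}
    (hf : ∀ t, t₀ ≤ t → HasDerivWithinAt f (f' t) (Ici t₀) t)
    (hf' : ∀ t, t₀ ≤ t → 0 ≤ f' t + c * f t) (h₀ : 0 ≤ f t₀) {t : ℝ}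
    (ht : t₀ ≤ t) : 0 ≤ f t := by
  have hmono := monotoneOn_mul_exp_of_deriv_add_mul_nonneg hf hf' self_mem_Ici ht ht
  have : 0 ≤ f t * exp (c * t) := le_trans (mul_nonneg h₀ (exp_pos _).le) hmono
  exact nonneg_of_mul_nonneg_left this (exp_pos _)

theorem stmt_10_general (n : ℕ) (lamVv lamV δ₁ β₂ : ℝ)
    (hle : lamVv ≤ lamV) (hβ₂ : 0 < β₂)
    (Vv Vv' V V' : ℝ → ℝ)
    (hVv : ∀ t, 0 ≤ t → HasDerivWithinAt Vv (Vv' t) (Set.Ici 0) t)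
    (hV : ∀ t, 0 ≤ t → HasDerivWithinAt V (V' t) (Set.Ici 0) t)
    (hVpos : ∀ t, 0 ≤ t → 0 ≤ V t)
    (hVdec : ∀ t, 0 ≤ t → V' t ≤ -lamV * V t)
    (de a : ℝ → EuclideanSpace ℝ (Fin n))
    (hde : ∀ t, 0 ≤ t → ‖de t‖ ≤ δ₁ * Real.exp (-lamV * t / 2))
    (hbar : ∀ t, 0 ≤ t →
      (inner ℝ (a t) (de t) : ℝ) + ‖a t‖ * δ₁ * Real.exp (-lamV * t / 2) ≤
        Vv' t + lamVv * Vv t)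
    (hinit : V 0 ≤ β₂ * Vv 0) :
    ∀ t, 0 ≤ t → 0 ≤ β₂ * Vv t - V t ∧ V t / β₂ ≤ Vv t ∧ 0 ≤ V t / β₂ := by
  have hVv_growth : ∀ t, 0 ≤ t → 0 ≤ Vv' t + lamVv * Vv t := fun t ht => by
    have := neg_mul_le_real_inner_of_norm_le (a t) (hde t ht)
    linarith [hbar t ht]
  have hV_decay : ∀ t, 0 ≤ t → V' t + lamVv * V t ≤ 0 := fun t ht => by
    nlinarith [hVdec t ht, hVpos t ht]
  have hbarrier : ∀ t, 0 ≤ t → 0 ≤ β₂ * Vv t - V t := fun t ht =>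
    nonneg_of_deriv_add_mul_nonneg (f := fun t => β₂ * Vv t - V t) (c := lamVv)
      (fun t ht => ((hVv t ht).const_mul β₂).sub (hV t ht))
      (fun t ht => by nlinarith [hVv_growth t ht, hV_decay t ht])
      (sub_nonneg.mpr hinit) ht
  intro t ht
  refine ⟨hbarrier t ht, ?_, div_nonneg (hVpos t ht) hβ₂.le⟩
  rw [div_le_iff₀ hβ₂]
  linarith [hbarrier t ht]

/-- Core of Theorem 2 along a trajectory: under the compensated VCBF condition
`V_v' + λ_{Vv} V_v ≥ ⟨a, d̃⟩ + ‖a‖ δ₁ e^{-λ_V t/2}`, with `V ≥ 0`,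
`V' ≤ -λ_V V`, `‖d̃ t‖ ≤ δ₁ e^{-λ_V t/2}`, and `β₂ V_v 0 ≥ V 0`, the candidate
barrier `h̄_V = β₂ V_v - V` stays nonnegative, hence `V_v t ≥ V t / β₂ ≥ 0`. -/
theorem stmt_10 (n : ℕ) (hn : 1 ≤ n) (lamVv lamV δ₁ β₂ : ℝ)
    (hlamVv : 0 < lamVv) (hle : lamVv ≤ lamV) (hδ₁ : 0 ≤ δ₁) (hβ₂ : 0 < β₂)
    (Vv Vv' V V' : ℝ → ℝ)
    (hVv : ∀ t, 0 ≤ t → HasDerivWithinAt Vv (Vv' t) (Set.Ici 0) t)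
    (hV : ∀ t, 0 ≤ t → HasDerivWithinAt V (V' t) (Set.Ici 0) t)
    (hVpos : ∀ t, 0 ≤ t → 0 ≤ V t)
    (hVdec : ∀ t, 0 ≤ t → V' t ≤ -lamV * V t)
    (de a : ℝ → EuclideanSpace ℝ (Fin n))
    (hde : ∀ t, 0 ≤ t → ‖de t‖ ≤ δ₁ * Real.exp (-lamV * t / 2))
    (hbar : ∀ t, 0 ≤ t →
      (inner ℝ (a t) (de t) : ℝ) + ‖a t‖ * δ₁ * Real.exp (-lamV * t / 2) ≤
        Vv' t + lamVv * Vv t)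
    (hinit : V 0 ≤ β₂ * Vv 0) :
    ∀ t, 0 ≤ t → 0 ≤ β₂ * Vv t - V t ∧ V t / β₂ ≤ Vv t ∧ 0 ≤ V t / β₂ :=
  stmt_10_general n lamVv lamV δ₁ β₂ hle hβ₂ Vv Vv' V V' hVv hV hVpos hVdec de a hde hbar hinit
end

section
/- Let n ≥ 1, N ≥ 1, and let λ_V, δ₁ > 0. Let V : [0,∞) → ℝ be differentiable with V(t) ≥ 0 and V'(t) ≤ -λ_V·V(t) for all t ≥ 0, and let d̃ : [0,∞) → ℝⁿ satisfy ‖d̃(t)‖ ≤ δ₁·exp(-λ_V·t/2) for all t ≥ 0 (Euclidean norm). For each i = 1, …, N let φᵢ : [0,∞) → ℝ be differentiable, aᵢ : [0,∞) → ℝⁿ, 0 < λᵢ ≤ λ_V, βᵢ > 0 with βᵢ·φᵢ(0) ≥ V(0) and φᵢ'(t) + λᵢ·φᵢ(t) ≥ ⟨aᵢ(t), d̃(t)⟩ + ‖aᵢ(t)‖·δ₁·exp(-λ_V·t/2) for all t ≥ 0. Moreover, let V_v : [0,∞) → ℝ be differentiable, a_v : [0,∞) → ℝⁿ, 0 < λ_v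 ≤ λ_V, β_v > 0 with β_v·V_v(0) ≥ V(0) and V_v'(t) + λ_v·V_v(t) ≥ ⟨a_v(t), d̃(t)⟩ + ‖a_v(t)‖·δ₁·exp(-λ_V·t/2) for all t ≥ 0. Then simultaneously φᵢ(t) ≥ 0 for all i = 1, …, N and V_v(t) ≥ 0, for all t ≥ 0. -/
/-!
The compensation term `‖a t‖ δ₁ e^{-λ_V t/2}` dominates the unknown disturbance term
`⟪a t, d̃ t⟫` by Cauchy–Schwarz, so each compensated condition implies the plain barrier
inequality `φ' + λ φ ≥ 0`. Then `e^{λ t} φ t` is nondecreasing, and `φ 0 ≥ V 0 / β ≥ 0`.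
-/

open Set

lemma nonneg_of_hasDerivWithinAt_add_mul_nonneg_s11 {f f' : ℝ → ℝ} {c t₀ : ℝ}
    (hf : ∀ t ∈ Ici t₀, HasDerivWithinAt f (f' t) (Ici t₀) t) (h₀ : 0 ≤ f t₀)
    (h : ∀ t ∈ Ici t₀, 0 ≤ f' t + c * f t) :
    ∀ t ∈ Ici t₀, 0 ≤ f t := by
  set g : ℝ → ℝ := fun t => Real.exp (c * t) * f t
  have hg : ∀ t ∈ Ici t₀,
      HasDerivWithinAt g (Real.exp (c * t) * (f' t + c * f t)) (Ici t₀) t := by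
    intro t ht
    have hexp := ((hasDerivAt_id t).const_mul c).exp.hasDerivWithinAt (s := Ici t₀)
    exact (hexp.mul (hf t ht)).congr_deriv (by simp only [id]; ring)
  have hmono : MonotoneOn g (Ici t₀) := by
    refine monotoneOn_of_hasDerivWithinAt_nonneg (convex_Ici t₀)
      (f' := fun t => Real.exp (c * t) * (f' t + c * f t))
      (fun t ht => (hg t ht).continuousWithinAt) (fun t ht => ?_) (fun t ht => ?_)
    all_goals rw [interior_Ici] at ht
    · rw [interior_Ici]
      exact (hg t (mem_Ici_of_Ioi ht)).mono Ioi_subset_Ici_self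
    · exact mul_nonneg (Real.exp_pos _).le (h t (mem_Ici_of_Ioi ht))
  intro t ht
  have hgt : 0 ≤ g t := calc
    0 ≤ g t₀ := mul_nonneg (Real.exp_pos _).le h₀
    _ ≤ g t := hmono self_mem_Ici ht ht
  exact nonneg_of_mul_nonneg_right hgt (Real.exp_pos _)

lemma real_inner_add_norm_mul_nonneg {E : Type*} [NormedAddCommGroup E]
    [InnerProductSpace ℝ E] (x : E) {y : E} {r : ℝ} (hy : ‖y‖ ≤ r) :
    0 ≤ inner ℝ x y + ‖x‖ * r := by
  have hcs : -(‖x‖ * ‖y‖) ≤ inner ℝ x y := neg_le_of_abs_le (abs_real_inner_le_norm x y)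
  nlinarith [mul_le_mul_of_nonneg_left hy (norm_nonneg x)]

lemma nonneg_of_compensated_barrier {E : Type*} [NormedAddCommGroup E]
    [InnerProductSpace ℝ E] {de a : ℝ → E} {δ lam : ℝ} {w φ φ' : ℝ → ℝ}
    (hde : ∀ t, 0 ≤ t → ‖de t‖ ≤ δ * w t)
    (hφ : ∀ t, 0 ≤ t → HasDerivWithinAt φ (φ' t) (Ici 0) t) (h₀ : 0 ≤ φ 0)
    (hbar : ∀ t, 0 ≤ t → inner ℝ (a t) (de t) + ‖a t‖ * δ * w t ≤ φ' t + lam * φ t) :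
    ∀ t, 0 ≤ t → 0 ≤ φ t :=
  nonneg_of_hasDerivWithinAt_add_mul_nonneg_s11 hφ h₀ fun t ht =>
    (mul_assoc (‖a t‖) δ (w t) ▸ real_inner_add_norm_mul_nonneg (a t) (hde t ht)).trans
      (hbar t ht)

theorem stmt_11_general (n N : ℕ) (lamV δ₁ : ℝ)
    (V : ℝ → ℝ)
    (hVpos : ∀ t, 0 ≤ t → 0 ≤ V t)
    (de : ℝ → EuclideanSpace ℝ (Fin n))
    (hde : ∀ t, 0 ≤ t → ‖de t‖ ≤ δ₁ * Real.exp (-lamV * t / 2))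
    (φ φ' : Fin N → ℝ → ℝ) (a : Fin N → ℝ → EuclideanSpace ℝ (Fin n))
    (lam β : Fin N → ℝ)
    (hβ : ∀ i, 0 < β i)
    (hφ : ∀ i, ∀ t, 0 ≤ t → HasDerivWithinAt (φ i) (φ' i t) (Set.Ici 0) t)
    (hinit : ∀ i, V 0 ≤ β i * φ i 0)
    (hbar : ∀ i, ∀ t, 0 ≤ t →
      (inner ℝ (a i t) (de t) : ℝ) + ‖a i t‖ * δ₁ * Real.exp (-lamV * t / 2) ≤
        φ' i t + lam i * φ i t)
    (Vv Vv' : ℝ → ℝ) (av : ℝ → EuclideanSpace ℝ (Fin n)) (lamv βv : ℝ)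
    (hβv : 0 < βv)
    (hVv : ∀ t, 0 ≤ t → HasDerivWithinAt Vv (Vv' t) (Set.Ici 0) t)
    (hinitv : V 0 ≤ βv * Vv 0)
    (hbarv : ∀ t, 0 ≤ t →
      (inner ℝ (av t) (de t) : ℝ) + ‖av t‖ * δ₁ * Real.exp (-lamV * t / 2) ≤
        Vv' t + lamv * Vv t) :
    ∀ t, 0 ≤ t → (∀ i, 0 ≤ φ i t) ∧ 0 ≤ Vv t := by
  intro t ht
  have hV₀ : 0 ≤ V 0 := hVpos 0 le_rfl
  refine ⟨fun i => ?_, ?_⟩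
  · have hφ₀ : 0 ≤ φ i 0 := nonneg_of_mul_nonneg_right (hV₀.trans (hinit i)) (hβ i)
    exact nonneg_of_compensated_barrier hde (hφ i) hφ₀ (hbar i) t ht
  · have hVv₀ : 0 ≤ Vv 0 := nonneg_of_mul_nonneg_right (hV₀.trans hinitv) hβv
    exact nonneg_of_compensated_barrier hde hVv hVv₀ hbarv t ht

/-- Core of Theorem 3 along a trajectory: if the `N` compensated HOCBF
conditions and the compensated VCBF condition all hold (zero slack in the
DOB-VCBF-QP), with `V ≥ 0`, `V' ≤ -λ_V V`, `‖d̃ t‖ ≤ δ₁ e^{-λ_V t/2}`, and the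
initial conditions `β_i φ_i 0 ≥ V 0`, `β_v V_v 0 ≥ V 0`, then simultaneously
`φ_i t ≥ 0` for every `i` and `V_v t ≥ 0`, for all `t ≥ 0`. -/
theorem stmt_11 (n N : ℕ) (hn : 1 ≤ n) (hN : 1 ≤ N) (lamV δ₁ : ℝ)
    (hlamV : 0 < lamV) (hδ₁ : 0 < δ₁)
    (V V' : ℝ → ℝ)
    (hV : ∀ t, 0 ≤ t → HasDerivWithinAt V (V' t) (Set.Ici 0) t)
    (hVpos : ∀ t, 0 ≤ t → 0 ≤ V t)
    (hVdec : ∀ t, 0 ≤ t → V' t ≤ -lamV * V t)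
    (de : ℝ → EuclideanSpace ℝ (Fin n))
    (hde : ∀ t, 0 ≤ t → ‖de t‖ ≤ δ₁ * Real.exp (-lamV * t / 2))
    (φ φ' : Fin N → ℝ → ℝ) (a : Fin N → ℝ → EuclideanSpace ℝ (Fin n))
    (lam β : Fin N → ℝ)
    (hlam : ∀ i, 0 < lam i) (hlamle : ∀ i, lam i ≤ lamV) (hβ : ∀ i, 0 < β i)
    (hφ : ∀ i, ∀ t, 0 ≤ t → HasDerivWithinAt (φ i) (φ' i t) (Set.Ici 0) t)
    (hinit : ∀ i, V 0 ≤ β i * φ i 0)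
    (hbar : ∀ i, ∀ t, 0 ≤ t →
      (inner ℝ (a i t) (de t) : ℝ) + ‖a i t‖ * δ₁ * Real.exp (-lamV * t / 2) ≤
        φ' i t + lam i * φ i t)
    (Vv Vv' : ℝ → ℝ) (av : ℝ → EuclideanSpace ℝ (Fin n)) (lamv βv : ℝ)
    (hlamv : 0 < lamv) (hlamvle : lamv ≤ lamV) (hβv : 0 < βv)
    (hVv : ∀ t, 0 ≤ t → HasDerivWithinAt Vv (Vv' t) (Set.Ici 0) t)
    (hinitv : V 0 ≤ βv * Vv 0)
    (hbarv : ∀ t, 0 ≤ t →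
      (inner ℝ (av t) (de t) : ℝ) + ‖av t‖ * δ₁ * Real.exp (-lamV * t / 2) ≤
        Vv' t + lamv * Vv t) :
    ∀ t, 0 ≤ t → (∀ i, 0 ≤ φ i t) ∧ 0 ≤ Vv t :=
  stmt_11_general n N lamV δ₁ V hVpos de hde φ φ' a lam β hβ hφ hinit hbar Vv Vv' av lamv βv hβv hVv
    hinitv hbarv
end
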